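/- arXiv:1201.3040 — 5 statements merged into one kernel-verified Lean document; each statement's English description precedes it below -/
import Mathlib

section
/- For subsets S_1,…,S_k of the monomials of A[ℝ≥0^d], the intersection of the ideals (S_i)R equals the ideal generated by all least common multiples lcm(f_1,…,f_k) where f_i ∈ S_i. Here lcm(X^{r_1},…,X^{r_k}) = X^p with p_j = max_i r_{i,j}. -/
open scoped NNReal ENNReal

/-- The semigroup ring `R = A[ℝ≥0 ^ d]`. -/
abbrev SemiRng (A : Type*) [CommRing A] (d : ℕ) : Type _ :=
  AddMonoidAlgebra A (Fin d → ℝ≥0)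

/-- The monomial `X^r` of `A[ℝ≥0 ^ d]`. -/
noncomputable def mono (A : Type*) [CommRing A] {d : ℕ} (r : Fin d → ℝ≥0) : SemiRng A d :=
  AddMonoidAlgebra.single r 1

/-- An ideal of `A[ℝ≥0 ^ d]` is a monomial ideal if it is generated by a set of monomials. -/
def IsMonomialIdeal {A : Type*} [CommRing A] {d : ℕ} (I : Ideal (SemiRng A d)) : Prop :=
  ∃ E : Set (Fin d → ℝ≥0), I = Ideal.span (mono A '' E)

/-- The set of (exponent vectors of) monomials contained in an ideal. -/
def monSet (A : Type*) [CommRing A] {d : ℕ} (I : Ideal (SemiRng A d)) :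
    Set (Fin d → ℝ≥0) :=
  {r | mono A r ∈ I}

/-- `geq e r a` means `r ≥_e a`: `r ≥ a` if `e = 0` (false), `r > a` if `e = 1` (true);
no finite `r` satisfies `r ≥_e ∞`. -/
def geq (e : Bool) (r : ℝ≥0) (a : ℝ≥0∞) : Prop :=
  if e then a < (r : ℝ≥0∞) else a ≤ (r : ℝ≥0∞)

/-- The ideal `J_{i,a,e}` generated by the pure powers `X_i^r` with `r ≥_e a`. -/
noncomputable def Jsingle (A : Type*) [CommRing A] {d : ℕ} (i : Fin d) (a : ℝ≥0∞)
    (e : Bool) : Ideal (SemiRng A d) :=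
  Ideal.span {f | ∃ r : ℝ≥0, geq e r a ∧ f = mono A (Pi.single i r)}

/-- The ideal `J_{a,e}` generated by all pure powers `X_i^r` with `r ≥_{e i} a i`. -/
noncomputable def Jideal (A : Type*) [CommRing A] {d : ℕ} (a : Fin d → ℝ≥0∞)
    (e : Fin d → Bool) : Ideal (SemiRng A d) :=
  Ideal.span {f | ∃ (i : Fin d) (r : ℝ≥0), geq (e i) r (a i) ∧ f = mono A (Pi.single i r)}

/-- The ideal `I_{a,e}` generated by all monomials `X^r` with `r i ≥_{e i} a i` for all `i`. -/
noncomputable def Iideal (A : Type*) [CommRing A] {d : ℕ} (a : Fin d → ℝ≥0∞)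
    (e : Fin d → Bool) : Ideal (SemiRng A d) :=
  Ideal.span {f | ∃ r : Fin d → ℝ≥0, (∀ i, geq (e i) (r i) (a i)) ∧ f = mono A r}

/-- A monomial ideal is m-irreducible if whenever it is an intersection of two monomial
ideals, it equals one of them. -/
def MIrred {A : Type*} [CommRing A] {d : ℕ} (I : Ideal (SemiRng A d)) : Prop :=
  ∀ J K : Ideal (SemiRng A d), IsMonomialIdeal J → IsMonomialIdeal K →
    I = J ⊓ K → I = J ∨ I = K

/-!
A polynomial lies in the ideal generated by monomials `X^e`, `e ∈ E`, iff every exponent in its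
support dominates some `e ∈ E`. An exponent dominates an element of each `S i` iff it dominates
their componentwise maximum, which is the exponent of their lcm.
-/

variable {A : Type*} [CommRing A] [Nontrivial A] {d : ℕ}

theorem AddMonoidAlgebra.mem_ideal_span_of'_image_iff_le {k G : Type*} [Semiring k]
    [AddCommMonoid G] [PartialOrder G] [CanonicallyOrderedAdd G] {s : Set G}
    {x : AddMonoidAlgebra k G} :
    x ∈ Ideal.span (AddMonoidAlgebra.of' k G '' s) ↔ ∀ m ∈ x.coeff.support, ∃ e ∈ s, e ≤ m := by
  simp only [AddMonoidAlgebra.mem_ideal_span_of'_image, le_iff_exists_add']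

theorem exists_sup_mem_pi_le_iff {ι α : Type*} [Fintype ι] [SemilatticeSup α] [OrderBot α]
    (S : ι → Set α) (m : α) :
    (∃ p ∈ {p | ∃ f : ι → α, (∀ i, f i ∈ S i) ∧ p = Finset.univ.sup f}, p ≤ m) ↔
      ∀ i, ∃ e ∈ S i, e ≤ m := by
  constructor
  · rintro ⟨_, ⟨f, hfS, rfl⟩, hle⟩ i
    exact ⟨f i, hfS i, (Finset.sup_le_iff.mp hle) i (Finset.mem_univ i)⟩
  · intro h
    choose f hfS hfle using h
    exact ⟨_, ⟨f, hfS, rfl⟩, Finset.sup_le fun i _ => hfle i⟩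

theorem stmt5_general (k : ℕ) (S : Fin k → Set (Fin d → ℝ≥0)) :
    (⨅ i, Ideal.span (mono A '' S i)) =
      Ideal.span (mono A ''
        {p | ∃ f : Fin k → Fin d → ℝ≥0, (∀ i, f i ∈ S i) ∧
          p = fun j => Finset.univ.sup fun i => f i j}) := by
  have mono_eq : mono A (d := d) = AddMonoidAlgebra.of' A (Fin d → ℝ≥0) := rfl
  have lcm_eq_sup (f : Fin k → Fin d → ℝ≥0) :
      (fun j => Finset.univ.sup fun i => f i j) = Finset.univ.sup f :=
    funext fun j => (Finset.sup_apply _ _ _).symm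
  ext x
  simp only [Ideal.mem_iInf, mono_eq, lcm_eq_sup,
    AddMonoidAlgebra.mem_ideal_span_of'_image_iff_le, exists_sup_mem_pi_le_iff]
  exact ⟨fun h m hm i => h i m hm, fun h i m hm => h m hm i⟩

theorem stmt5 (k : ℕ) (hk : 0 < k) (S : Fin k → Set (Fin d → ℝ≥0)) :
    (⨅ i, Ideal.span (mono A '' S i)) =
      Ideal.span (mono A ''
        {p | ∃ f : Fin k → Fin d → ℝ≥0, (∀ i, f i ∈ S i) ∧
          p = fun j => Finset.univ.sup fun i => f i j}) :=
  stmt5_general k S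
end

section
/- Let G be a set of monomials of R = A[ℝ≥0^d], I = (G)R, and let X^b ∈ I be a monomial. For j = 1,…,d set I_j = (G ∪ {X_j^{b_j}})R. Then I = ⋂_{j=1}^d I_j. -/
open scoped NNReal ENNReal

variable {A : Type*} [CommRing A] [Nontrivial A] {d : ℕ}

/-!
A monomial ideal is read off exponent-wise: a polynomial lies in `(X^g : g ∈ G)` iff every
exponent in its support dominates some `g ∈ G`. An exponent `m` either dominates `b`, hence a
generator below `b`, or falls short of `b` in some coordinate `j`; then `X_j^{b_j}` does not
divide `X^m`, so the generator of `I_j` below `m` already lies in `G`.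
-/

omit [Nontrivial A] in
lemma mem_span_mono_image_iff (G : Set (Fin d → ℝ≥0)) (x : SemiRng A d) :
    x ∈ Ideal.span (mono A '' G) ↔ ∀ m ∈ x.coeff.support, ∃ g ∈ G, g ≤ m := by
  rw [show mono A '' G = AddMonoidAlgebra.of' A (Fin d → ℝ≥0) '' G from rfl,
    AddMonoidAlgebra.mem_ideal_span_of'_image]
  refine forall₂_congr fun m _ => ⟨?_, ?_⟩
  · rintro ⟨g, hg, s, rfl⟩
    exact ⟨g, hg, le_add_self⟩
  · rintro ⟨g, hg, hgm⟩
    exact ⟨g, hg, m - g, (tsub_add_cancel_of_le hgm).symm⟩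

lemma mono_mem_span_mono_image_iff (G : Set (Fin d → ℝ≥0)) (r : Fin d → ℝ≥0) :
    mono A r ∈ Ideal.span (mono A '' G) ↔ ∃ g ∈ G, g ≤ r := by
  simp [mem_span_mono_image_iff, mono, AddMonoidAlgebra.coeff_single, Finsupp.support_single]

lemma exists_le_of_forall_exists_le_union_single {ι M : Type*} [DecidableEq ι] [Zero M]
    [Preorder M] {G : Set (ι → M)} {b m : ι → M} (hb : ∃ g ∈ G, g ≤ b)
    (hm : ∀ j, ∃ g ∈ G ∪ {Pi.single j (b j)}, g ≤ m) : ∃ g ∈ G, g ≤ m := by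
  by_cases hbm : b ≤ m
  · obtain ⟨g, hg, hgb⟩ := hb
    exact ⟨g, hg, hgb.trans hbm⟩
  obtain ⟨j, hj⟩ : ∃ j, ¬b j ≤ m j := by simpa [Pi.le_def] using hbm
  obtain ⟨g, hg | rfl, hgm⟩ := hm j
  · exact ⟨g, hg, hgm⟩
  · exact absurd (by simpa using hgm j) hj

theorem stmt6 (G : Set (Fin d → ℝ≥0)) (b : Fin d → ℝ≥0)
    (hb : mono A b ∈ Ideal.span (mono A '' G)) :
    Ideal.span (mono A '' G) =
      ⨅ j : Fin d, Ideal.span (mono A '' (G ∪ {Pi.single j (b j)})) := by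
  refine le_antisymm (le_iInf fun j => Ideal.span_mono (Set.image_mono Set.subset_union_left)) ?_
  intro x hx
  rw [mem_span_mono_image_iff]
  intro m hm
  refine exists_le_of_forall_exists_le_union_single
    ((mono_mem_span_mono_image_iff G b).mp hb) fun j => ?_
  exact (mem_span_mono_image_iff _ x).mp (Ideal.mem_iInf.mp hx j) m hm
end

section
/- For monomial ideals K_{t,i} of R = A[ℝ≥0^d] (1 ≤ t ≤ l, 1 ≤ i ≤ m_t), the intersection over t of the sums ∑_{i_t} K_{t,i_t} equals the sum over all tuples (i_1,…,i_l) of the intersections ⋂_t K_{t,i_t}. -/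
open scoped NNReal ENNReal

/-!
A monomial ideal is determined by its set of monomial exponents, which is an upper set of
`ℝ≥0 ^ d`; a polynomial lies in it iff all exponents in its support do. Under this
correspondence intersections of monomial ideals become intersections of exponent sets and sums
become unions, so the claim is the complete distributivity of the lattice of sets.
-/

section MonomialIdeal

variable {A : Type*} [CommRing A] {d : ℕ}

lemma mono_add (r s : Fin d → ℝ≥0) : mono A (r + s) = mono A r * mono A s := by
  simp only [mono, AddMonoidAlgebra.single_mul_single, one_mul]

lemma mem_span_mono_iff {E : Set (Fin d → ℝ≥0)} {f : SemiRng A d} :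
    f ∈ Ideal.span (mono A '' E) ↔ ∀ r ∈ f.coeff.support, ∃ e ∈ E, e ≤ r := by
  simp only [le_iff_exists_add']
  exact AddMonoidAlgebra.mem_ideal_span_of'_image

lemma mono_mem_span_mono_iff [Nontrivial A] {E : Set (Fin d → ℝ≥0)} {r : Fin d → ℝ≥0} :
    mono A r ∈ Ideal.span (mono A '' E) ↔ ∃ e ∈ E, e ≤ r := by
  simp [mem_span_mono_iff, mono, AddMonoidAlgebra.coeff_single]

lemma isUpperSet_monSet (I : Ideal (SemiRng A d)) : IsUpperSet (monSet A I) := by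
  intro e r hle he
  obtain ⟨s, rfl⟩ := exists_add_of_le hle
  show mono A (e + s) ∈ I
  rw [mono_add]
  exact I.mul_mem_right _ he

lemma span_mono_monSet_le (I : Ideal (SemiRng A d)) :
    Ideal.span (mono A '' monSet A I) ≤ I :=
  Ideal.span_le.2 <| Set.image_subset_iff.2 fun _ hr => hr

lemma eq_span_monSet_of_support_subset {I : Ideal (SemiRng A d)}
    (h : ∀ f ∈ I, ↑f.coeff.support ⊆ monSet A I) : I = Ideal.span (mono A '' monSet A I) :=
  le_antisymm (fun f hf => mem_span_mono_iff.2 fun r hr => ⟨r, h f hf hr, le_rfl⟩)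
    (span_mono_monSet_le I)

lemma IsMonomialIdeal.support_subset_monSet {I : Ideal (SemiRng A d)} (hI : IsMonomialIdeal I)
    {f : SemiRng A d} (hf : f ∈ I) : ↑f.coeff.support ⊆ monSet A I := by
  obtain ⟨E, rfl⟩ := hI
  intro r hr
  obtain ⟨e, he, hle⟩ := mem_span_mono_iff.1 hf r hr
  exact isUpperSet_monSet _ hle (Ideal.subset_span ⟨e, he, rfl⟩)

lemma IsMonomialIdeal.eq_span_monSet {I : Ideal (SemiRng A d)} (hI : IsMonomialIdeal I) :
    I = Ideal.span (mono A '' monSet A I) :=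
  eq_span_monSet_of_support_subset fun _ => hI.support_subset_monSet

lemma IsMonomialIdeal.ext {I J : Ideal (SemiRng A d)} (hI : IsMonomialIdeal I)
    (hJ : IsMonomialIdeal J) (h : monSet A I = monSet A J) : I = J := by
  rw [hI.eq_span_monSet, hJ.eq_span_monSet, h]

variable {ι : Sort*} {K : ι → Ideal (SemiRng A d)}

lemma monSet_iInf : monSet A (⨅ i, K i) = ⋂ i, monSet A (K i) := by
  ext r
  rw [Set.mem_iInter]
  exact Submodule.mem_iInf _

lemma IsMonomialIdeal.iInf (hK : ∀ i, IsMonomialIdeal (K i)) : IsMonomialIdeal (⨅ i, K i) := by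
  refine ⟨_, eq_span_monSet_of_support_subset fun f hf => ?_⟩
  rw [monSet_iInf]
  exact Set.subset_iInter fun i => (hK i).support_subset_monSet (Submodule.mem_iInf _ |>.1 hf i)

lemma iSup_eq_span_iUnion_monSet (hK : ∀ i, IsMonomialIdeal (K i)) :
    ⨆ i, K i = Ideal.span (mono A '' ⋃ i, monSet A (K i)) := by
  rw [Set.image_iUnion, Ideal.span_iUnion]
  exact iSup_congr fun i => (hK i).eq_span_monSet

lemma IsMonomialIdeal.iSup (hK : ∀ i, IsMonomialIdeal (K i)) : IsMonomialIdeal (⨆ i, K i) :=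
  ⟨_, iSup_eq_span_iUnion_monSet hK⟩

lemma monSet_iSup [Nontrivial A] (hK : ∀ i, IsMonomialIdeal (K i)) :
    monSet A (⨆ i, K i) = ⋃ i, monSet A (K i) := by
  refine le_antisymm (fun r hr => ?_) (Set.iUnion_subset fun i r hr => le_iSup K i hr)
  change mono A r ∈ ⨆ i, K i at hr
  rw [iSup_eq_span_iUnion_monSet hK, mono_mem_span_mono_iff] at hr
  obtain ⟨e, he, hle⟩ := hr
  obtain ⟨i, hi⟩ := Set.mem_iUnion.1 he
  exact Set.mem_iUnion.2 ⟨i, isUpperSet_monSet _ hle hi⟩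

end MonomialIdeal

variable {A : Type*} [CommRing A] [Nontrivial A] {d : ℕ}

theorem stmt7_general (l : ℕ) (m : Fin l → ℕ)
    (K : (t : Fin l) → Fin (m t) → Ideal (SemiRng A d))
    (hK : ∀ t i, IsMonomialIdeal (K t i)) :
    (⨅ t, ⨆ i, K t i) = ⨆ c : (t : Fin l) → Fin (m t), ⨅ t, K t (c t) := by
  have hsum : ∀ t, IsMonomialIdeal (⨆ i, K t i) := fun t => .iSup (hK t)
  have hinf : ∀ c : (t : Fin l) → Fin (m t), IsMonomialIdeal (⨅ t, K t (c t)) :=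
    fun c => .iInf fun t => hK t (c t)
  refine (IsMonomialIdeal.iInf hsum).ext (.iSup hinf) ?_
  simp only [monSet_iInf, monSet_iSup hinf, monSet_iSup (hK _)]
  exact iInf_iSup_eq

theorem stmt7 (l : ℕ) (m : Fin l → ℕ) (hm : ∀ t, 1 ≤ m t)
    (K : (t : Fin l) → Fin (m t) → Ideal (SemiRng A d))
    (hK : ∀ t i, IsMonomialIdeal (K t i)) :
    (⨅ t, ⨆ i, K t i) = ⨆ c : (t : Fin l) → Fin (m t), ⨅ t, K t (c t) :=
  stmt7_general l m K hK
end

section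
/- Each ideal J_{α,ε} generated by pure powers of variables is m-irreducible: if J_{α,ε} = J ∩ K for monomial ideals J, K of A[ℝ≥0^d], then J_{α,ε} = J or J_{α,ε} = K. -/
open scoped NNReal ENNReal

variable {A : Type*} [CommRing A] [Nontrivial A] {d : ℕ}

/-!
Membership of a monomial in `J_{α,ε}` is decided by a single coordinate, and `(s ⊔ t) i` is
`s i` or `t i`; so `X^(s ⊔ t) ∈ J_{α,ε}` forces `X^s ∈ J_{α,ε}` or `X^t ∈ J_{α,ε}`. If
`J_{α,ε} = J ⊓ K` differed from both, some generator `X^s` of `J` and some generator `X^t` of `K`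
would lie outside `J_{α,ε}`, while their common multiple `X^(s ⊔ t)` lies in `J ⊓ K`.
-/

lemma geq_of_le {e : Bool} {r r' : ℝ≥0} {a : ℝ≥0∞} (h : geq e r a) (hr : r ≤ r') : geq e r' a := by
  have hr' : (r : ℝ≥0∞) ≤ r' := ENNReal.coe_le_coe.mpr hr
  cases e
  · exact (h : a ≤ r).trans hr'
  · exact (h : a < r).trans_le hr'

section Monomials

variable {A : Type*} [CommRing A] {d : ℕ}

lemma mono_mem_of_le {I : Ideal (SemiRng A d)} {s r : Fin d → ℝ≥0} (hs : mono A s ∈ I)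
    (hsr : s ≤ r) : mono A r ∈ I := by
  obtain ⟨c, rfl⟩ := le_iff_exists_add'.mp hsr
  simpa [mono, AddMonoidAlgebra.single_mul_single] using I.mul_mem_left (mono A c) hs

lemma mono_mem_span_image_iff [Nontrivial A] {E : Set (Fin d → ℝ≥0)} {r : Fin d → ℝ≥0} :
    mono A r ∈ Ideal.span (mono A '' E) ↔ ∃ s ∈ E, s ≤ r := by
  refine (AddMonoidAlgebra.mem_ideal_span_of'_image (x := mono A r)).trans ?_
  simp [mono, le_iff_exists_add']

lemma mIrred_of_mono_sup_mem {I : Ideal (SemiRng A d)}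
    (hI : ∀ s t, mono A (s ⊔ t) ∈ I → mono A s ∈ I ∨ mono A t ∈ I) : MIrred I := by
  rintro J K ⟨EJ, rfl⟩ ⟨EK, rfl⟩ hIJK
  have eq_span_of_subset {E : Set (Fin d → ℝ≥0)} (hle : I ≤ Ideal.span (mono A '' E))
      (hE : ∀ s ∈ E, mono A s ∈ I) : I = Ideal.span (mono A '' E) :=
    hle.antisymm (Ideal.span_le.mpr (Set.image_subset_iff.mpr hE))
  by_contra! hne
  obtain ⟨s, hsJ, hsI⟩ : ∃ s ∈ EJ, mono A s ∉ I := by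
    by_contra! hJ
    exact hne.1 (eq_span_of_subset (hIJK ▸ inf_le_left) hJ)
  obtain ⟨t, htK, htI⟩ : ∃ t ∈ EK, mono A t ∉ I := by
    by_contra! hK
    exact hne.2 (eq_span_of_subset (hIJK ▸ inf_le_right) hK)
  have hst : mono A (s ⊔ t) ∈ I := hIJK ▸
    ⟨mono_mem_of_le (Ideal.subset_span ⟨s, hsJ, rfl⟩) le_sup_left,
      mono_mem_of_le (Ideal.subset_span ⟨t, htK, rfl⟩) le_sup_right⟩
  exact (hI s t hst).elim hsI htI

end Monomials

lemma mono_mem_Jideal_iff (a : Fin d → ℝ≥0∞) (e : Fin d → Bool) (r : Fin d → ℝ≥0) :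
    mono A r ∈ Jideal A a e ↔ ∃ i, geq (e i) (r i) (a i) := by
  have hgen : {f | ∃ (i : Fin d) (r : ℝ≥0), geq (e i) r (a i) ∧ f = mono A (Pi.single i r)} =
      mono A '' {s | ∃ (i : Fin d) (r : ℝ≥0), geq (e i) r (a i) ∧ s = Pi.single i r} := by
    ext f
    exact ⟨fun ⟨i, r, hr, hf⟩ ↦ ⟨_, ⟨i, r, hr, rfl⟩, hf.symm⟩,
      fun ⟨_, ⟨i, r, hr, rfl⟩, hf⟩ ↦ ⟨i, r, hr, hf.symm⟩⟩
  rw [Jideal, hgen, mono_mem_span_image_iff]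
  constructor
  · rintro ⟨_, ⟨i, s, hs, rfl⟩, hsr⟩
    exact ⟨i, geq_of_le hs (by simpa using hsr i)⟩
  · rintro ⟨i, hi⟩
    refine ⟨_, ⟨i, r i, hi, rfl⟩, fun j ↦ ?_⟩
    rcases eq_or_ne j i with rfl | hji <;> simp [*]

lemma mono_sup_mem_Jideal (a : Fin d → ℝ≥0∞) (e : Fin d → Bool) (s t : Fin d → ℝ≥0)
    (h : mono A (s ⊔ t) ∈ Jideal A a e) : mono A s ∈ Jideal A a e ∨ mono A t ∈ Jideal A a e := by
  simp only [mono_mem_Jideal_iff] at h ⊢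
  obtain ⟨i, hi⟩ := h
  rcases max_choice (s i) (t i) with hs | ht
  · exact .inl ⟨i, by rwa [Pi.sup_apply, hs] at hi⟩
  · exact .inr ⟨i, by rwa [Pi.sup_apply, ht] at hi⟩

theorem stmt10 (a : Fin d → ℝ≥0∞) (e : Fin d → Bool)
    (J K : Ideal (SemiRng A d)) (hJ : IsMonomialIdeal J) (hK : IsMonomialIdeal K)
    (h : Jideal A a e = J ⊓ K) :
    Jideal A a e = J ∨ Jideal A a e = K :=
  mIrred_of_mono_sup_mem (mono_sup_mem_Jideal a e) J K hJ hK h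
end

section
/- Any finite intersection ⋂_{t=1}^k J_{i_t,α_t,ε_t} of ideals generated by pure powers of single variables has the form I_{β,δ} for some β ∈ (ℝ≥0 ∪ {∞})^d and δ ∈ {0,1}^d. -/
open scoped NNReal ENNReal

/-!
Each `J_{i,α,ε}` is spanned by the monomials whose exponent lies in the up-set
`{s | s_i ≥_ε α}`. For an up-set of exponents, membership in the monomial ideal it spans can be
read off the support, so intersecting such ideals intersects the up-sets. Finally `r ≥_ε a` means
`(a, ε) ≤ (r, 0)` lexicographically, so the conditions on one coordinate `j` combine into the single
condition given by their lexicographic maximum `(β_j, δ_j)`.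
-/

namespace AddMonoidAlgebra

variable {k G : Type*} [Semiring k] [AddCommMonoid G] [PartialOrder G] [CanonicallyOrderedAdd G]

theorem mem_ideal_span_of'_image_iff_of_isUpperSet {s : Set G} (hs : IsUpperSet s)
    {x : AddMonoidAlgebra k G} :
    x ∈ Ideal.span (of' k G '' s) ↔ ∀ m ∈ x.coeff.support, m ∈ s := by
  rw [mem_ideal_span_of'_image]
  refine forall₂_congr fun m _ => ⟨?_, fun hm => ⟨m, hm, 0, (zero_add m).symm⟩⟩
  rintro ⟨m', hm', u, rfl⟩
  exact hs le_add_self hm'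

theorem iInf_ideal_span_of'_image {ι : Sort*} {s : ι → Set G} (hs : ∀ t, IsUpperSet (s t)) :
    ⨅ t, Ideal.span (of' k G '' s t) = Ideal.span (of' k G '' ⋂ t, s t) := by
  ext x
  simp only [Submodule.mem_iInf, mem_ideal_span_of'_image_iff_of_isUpperSet (hs _),
    mem_ideal_span_of'_image_iff_of_isUpperSet (isUpperSet_iInter hs), Set.mem_iInter]
  exact forall_comm.trans (forall_congr' fun m => forall_comm)

end AddMonoidAlgebra

theorem geq_iff_toLex_le {e : Bool} {r : ℝ≥0} {a : ℝ≥0∞} :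
    geq e r a ↔ toLex (a, e) ≤ toLex ((r : ℝ≥0∞), false) := by
  rw [Prod.Lex.toLex_le_toLex]
  cases e <;> simp [geq, le_iff_lt_or_eq]

theorem geq_mono {e : Bool} {a : ℝ≥0∞} : Monotone fun r : ℝ≥0 => geq e r a := by
  intro x y hxy
  simp only [geq_iff_toLex_le, le_Prop_eq]
  exact fun h => h.trans (Prod.Lex.toLex_mono ⟨ENNReal.coe_le_coe.2 hxy, le_rfl⟩)

theorem exists_geq_iff_forall_geq {ι : Type*} [Fintype ι] {d : ℕ} (i : ι → Fin d)
    (α : ι → ℝ≥0∞) (ε : ι → Bool) :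
    ∃ (β : Fin d → ℝ≥0∞) (δ : Fin d → Bool),
      ∀ j r, geq (δ j) r (β j) ↔ ∀ t, i t = j → geq (ε t) r (α t) := by
  classical
  let m j := {t | i t = j}.toFinset.sup fun t => toLex (α t, ε t)
  refine ⟨fun j => (ofLex (m j)).1, fun j => (ofLex (m j)).2, fun j r => ?_⟩
  simp [geq_iff_toLex_le, m, Finset.sup_le_iff]

theorem isUpperSet_setOf_geq {d : ℕ} {e : Bool} {a : ℝ≥0∞} (j : Fin d) :
    IsUpperSet {s : Fin d → ℝ≥0 | geq e (s j) a} :=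
  fun _ _ h => geq_mono (Pi.le_def.1 h j)

section

open AddMonoidAlgebra

variable {A : Type*} [CommRing A] {d : ℕ}

theorem mono_eq_of' : mono A = of' A (Fin d → ℝ≥0) := rfl

theorem Iideal_eq_span (a : Fin d → ℝ≥0∞) (e : Fin d → Bool) :
    Iideal A a e = Ideal.span (of' A _ '' {r | ∀ i, geq (e i) (r i) (a i)}) := by
  rw [Iideal, mono_eq_of']
  congr 1
  ext f
  simp [eq_comm]

theorem Jsingle_eq_span (j : Fin d) (a : ℝ≥0∞) (e : Bool) :
    Jsingle A j a e = Ideal.span (of' A _ '' {s | geq e (s j) a}) := by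
  classical
  refine le_antisymm (Ideal.span_le.2 ?_) (Ideal.span_le.2 ?_)
  · rintro _ ⟨r, hr, rfl⟩
    exact Ideal.subset_span ⟨Pi.single j r, by simpa using hr, rfl⟩
  · rintro _ ⟨s, hs, rfl⟩
    have hsplit : s = (s - Pi.single j (s j)) + Pi.single j (s j) :=
      (tsub_add_cancel_of_le (update_le_iff.2 ⟨le_rfl, fun _ _ => zero_le⟩)).symm
    rw [SetLike.mem_coe, hsplit, of'_apply, ← one_mul (1 : A), ← single_mul_single]
    exact Ideal.mul_mem_left _ _ (Ideal.subset_span ⟨s j, hs, rfl⟩)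

end

variable {A : Type*} [CommRing A] [Nontrivial A] {d : ℕ}

theorem stmt15_general (k : ℕ) (i : Fin k → Fin d)
    (α : Fin k → ℝ≥0∞) (ε : Fin k → Bool) :
    ∃ (β : Fin d → ℝ≥0∞) (δ : Fin d → Bool),
      (⨅ t, Jsingle A (i t) (α t) (ε t)) = Iideal A β δ := by
  obtain ⟨β, δ, hβδ⟩ := exists_geq_iff_forall_geq i α ε
  refine ⟨β, δ, ?_⟩
  simp_rw [Jsingle_eq_span, Iideal_eq_span]
  rw [AddMonoidAlgebra.iInf_ideal_span_of'_image fun t => isUpperSet_setOf_geq (i t)]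
  congr 2
  ext s
  simp only [Set.mem_iInter, Set.mem_ofPred_eq, hβδ]
  exact ⟨fun h j t hj => hj ▸ h t, fun h t => h (i t) t rfl⟩

theorem stmt15 (k : ℕ) (hk : 1 ≤ k) (i : Fin k → Fin d)
    (α : Fin k → ℝ≥0∞) (ε : Fin k → Bool) :
    ∃ (β : Fin d → ℝ≥0∞) (δ : Fin d → Bool),
      (⨅ t, Jsingle A (i t) (α t) (ε t)) = Iideal A β δ :=
  stmt15_general k i α ε
end
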